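/- arXiv:2602.08287 — 3 statements merged into one kernel-verified Lean document; each statement's English description precedes it below -/
import Mathlib

section
/- For jointly Gaussian random variables (X,Y) with mean zero, unit variances, and correlation ρ ∈ (-1,1), the expectation E[max(0,X)·max(0,Y)] equals (1/(2π))(√(1-ρ²) + ρ(π - arccos ρ)). -/
/-!
Put `s = √(1 - ρ²)` and `α = arccos ρ`, so that `(ρ, s) = (cos α, sin α)`. The shear
`(x, z) ↦ (x, ρ x + s z)` has determinant `s` and turns the density into the standard Gaussian
`exp (-(x² + z²) / 2) / (2π s)`: `(X, Y) = (Z₁, cos α Z₁ + sin α Z₂)` with `Z` standard.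
In polar coordinates `Z = r (cos θ, sin θ)` this reads `Y = r cos (θ - α)`, so the integral
factors into the radial moment `∫ r³ exp (-r² / 2) dr = 2` and the integral of
`cos θ cos (θ - α)` over the arc `[α - π / 2, π / 2]` where both cosines are nonnegative,
which is `((π - α) cos α + sin α) / 2`.
-/

open Real MeasureTheory Set

theorem integral_Ioi_pow_three_mul_exp_neg_mul_sq {b : ℝ} (hb : 0 < b) :
    ∫ r in Ioi (0 : ℝ), r ^ 3 * exp (-b * r ^ 2) = 1 / (2 * b ^ 2) := by
  have h := integral_rpow_mul_exp_neg_mul_rpow (p := 2) (q := 3) two_pos (by norm_num) hb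
  norm_num [Real.rpow_natCast, Real.rpow_neg hb.le] at h
  simp only [neg_mul, h]
  ring

lemma integral_cos_mul_cos_sub (α a b : ℝ) :
    ∫ θ in a..b, cos θ * cos (θ - α) =
      (b - a) * cos α / 2 + (sin (2 * b - α) - sin (2 * a - α)) / 4 := by
  have hderiv : ∀ θ ∈ uIcc a b,
      HasDerivAt (fun θ => θ * cos α / 2 + sin (2 * θ - α) / 4) (cos θ * cos (θ - α)) θ := by
    intro θ _
    have h := (((hasDerivAt_id θ).mul_const (cos α)).div_const 2).add
      ((((hasDerivAt_id θ).const_mul 2).sub_const α).sin.div_const 4)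
    refine h.congr_deriv ?_
    have h₁ : cos (2 * θ - α) = cos θ * cos (θ - α) - sin θ * sin (θ - α) := by
      rw [← cos_add]; ring_nf
    have h₂ : cos α = cos θ * cos (θ - α) + sin θ * sin (θ - α) := by
      rw [← cos_sub]; ring_nf
    simp only [id]
    linear_combination h₂ / 2 + h₁ / 2
  rw [intervalIntegral.integral_eq_sub_of_hasDerivAt hderiv
    ((by fun_prop : Continuous fun θ => cos θ * cos (θ - α)).intervalIntegrable _ _)]
  ring

theorem integral_max_cos_mul_max_cos_sub {α : ℝ} (hα : α ∈ Icc 0 π) :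
    ∫ θ in Ioo (-π) π, max 0 (cos θ) * max 0 (cos (θ - α)) =
      ((π - α) * cos α + sin α) / 2 := by
  obtain ⟨hα₀, hαπ⟩ := hα
  have hπ := pi_pos
  have hvanish : ∀ θ ∈ Ioo (-π) π \ Ioc (α - π / 2) (π / 2),
      max 0 (cos θ) * max 0 (cos (θ - α)) = 0 := by
    rintro θ ⟨⟨hθ₁, hθ₂⟩, hθ⟩
    rw [mem_Ioc, not_and_or, not_lt, not_le] at hθ
    rcases hθ with hθ | hθ
    · rcases le_or_gt θ (-(π / 2)) with hθ' | hθ'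
      · have h := cos_nonpos_of_pi_div_two_le_of_le (x := -θ) (by linarith) (by linarith)
        rw [cos_neg] at h
        rw [max_eq_left h, zero_mul]
      · have h := cos_nonpos_of_pi_div_two_le_of_le (x := -(θ - α)) (by linarith) (by linarith)
        rw [cos_neg] at h
        rw [max_eq_left h, mul_zero]
    · rw [max_eq_left (cos_nonpos_of_pi_div_two_le_of_le hθ.le (by linarith)), zero_mul]
  have hpos : ∀ θ ∈ uIcc (α - π / 2) (π / 2),
      max 0 (cos θ) * max 0 (cos (θ - α)) = cos θ * cos (θ - α) := by
    intro θ hθ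
    rw [uIcc_of_le (by linarith)] at hθ
    obtain ⟨hθ₁, hθ₂⟩ := hθ
    rw [max_eq_right (cos_nonneg_of_neg_pi_div_two_le_of_le (by linarith) hθ₂),
      max_eq_right (cos_nonneg_of_neg_pi_div_two_le_of_le (by linarith) (by linarith))]
  rw [setIntegral_eq_of_subset_of_forall_sdiff_eq_zero measurableSet_Ioo
      (Ioc_subset_Ioo (by linarith) (by linarith)) hvanish,
    ← intervalIntegral.integral_of_le (by linarith), intervalIntegral.integral_congr hpos,
    integral_cos_mul_cos_sub, show 2 * (π / 2) - α = π - α by ring,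
    show 2 * (α - π / 2) - α = -(π - α) by ring, sin_neg, sin_pi_sub]
  ring

lemma max_zero_mul_of_nonneg {r : ℝ} (hr : 0 ≤ r) (x : ℝ) : max 0 (r * x) = r * max 0 x := by
  rw [mul_max_of_nonneg _ _ hr, mul_zero]

theorem integral_max_zero_mul_max_zero_mul_gaussian {α : ℝ} (hα : α ∈ Icc 0 π) :
    ∫ z : ℝ × ℝ, max 0 z.1 * max 0 (cos α * z.1 + sin α * z.2) * exp (-(z.1 ^ 2 + z.2 ^ 2) / 2) =
      (π - α) * cos α + sin α := by
  have hpolar : ∀ p ∈ polarCoord.target,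
      p.1 • (fun z : ℝ × ℝ => max 0 z.1 * max 0 (cos α * z.1 + sin α * z.2) *
          exp (-(z.1 ^ 2 + z.2 ^ 2) / 2)) (polarCoord.symm p) =
        p.1 ^ 3 * exp (-(1 / 2) * p.1 ^ 2) * (max 0 (cos p.2) * max 0 (cos (p.2 - α))) := by
    rintro ⟨r, θ⟩ ⟨hr, -⟩
    have hr : 0 ≤ r := le_of_lt hr
    have hrot : cos α * (r * cos θ) + sin α * (r * sin θ) = r * cos (θ - α) := by
      rw [cos_sub]; ring
    have hnorm : (r * cos θ) ^ 2 + (r * sin θ) ^ 2 = r ^ 2 := by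
      rw [mul_pow, mul_pow, ← mul_add, cos_sq_add_sin_sq, mul_one]
    simp only [polarCoord_symm_apply, smul_eq_mul, hrot, hnorm, max_zero_mul_of_nonneg hr]
    ring_nf
  rw [← integral_comp_polarCoord_symm,
    setIntegral_congr_fun polarCoord.open_target.measurableSet hpolar,
    polarCoord_target, Measure.volume_eq_prod,
    setIntegral_prod_mul (fun r => r ^ 3 * exp (-(1 / 2) * r ^ 2))
      (fun θ => max 0 (cos θ) * max 0 (cos (θ - α))),
    integral_Ioi_pow_three_mul_exp_neg_mul_sq one_half_pos, integral_max_cos_mul_max_cos_sub hα]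
  ring

def shear (c s : ℝ) : ℝ × ℝ →ₗ[ℝ] ℝ × ℝ :=
  (LinearMap.fst ℝ ℝ ℝ).prod (c • LinearMap.fst ℝ ℝ ℝ + s • LinearMap.snd ℝ ℝ ℝ)

lemma det_shear (c s : ℝ) : LinearMap.det (shear c s) = s := by
  rw [← LinearMap.det_toMatrix (Module.Basis.finTwoProd ℝ), Matrix.det_fin_two]
  simp [shear, LinearMap.toMatrix_apply]

theorem integral_comp_shear {E : Type*} [NormedAddCommGroup E] [NormedSpace ℝ E]
    (g : ℝ × ℝ → E) (c : ℝ) {s : ℝ} (hs : s ≠ 0) :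
    ∫ z : ℝ × ℝ, g (z.1, c * z.1 + s * z.2) = |s|⁻¹ • ∫ p, g p := by
  have hdet : LinearMap.det (shear c s) ≠ 0 := by rwa [det_shear]
  have hmap := Measure.map_linearMap_addHaar_eq_smul_addHaar (volume : Measure (ℝ × ℝ)) hdet
  rw [det_shear] at hmap
  let e := ((shear c s).equivOfDetNeZero hdet).toContinuousLinearEquiv.toHomeomorph
  have he : ⇑e = shear c s := rfl
  have h := e.measurableEmbedding.integral_map (μ := volume) g
  rw [he, hmap, integral_smul_measure, ENNReal.toReal_ofReal (abs_nonneg _), abs_inv] at h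
  exact h.symm

lemma gaussian_exponent_comp_shear {ρ s : ℝ} (hρ : 1 - ρ ^ 2 ≠ 0) (hs : s ^ 2 = 1 - ρ ^ 2)
    (x z : ℝ) :
    -(x ^ 2 - 2 * ρ * x * (ρ * x + s * z) + (ρ * x + s * z) ^ 2) / (2 * (1 - ρ ^ 2)) =
      -(x ^ 2 + z ^ 2) / 2 := by
  field_simp
  linear_combination (-z ^ 2) * hs

/-- Noise stability of ReLU: for a bivariate Gaussian pair with correlation
`ρ ∈ (-1,1)`, `E[ReLU(X)·ReLU(Y)] = (1/(2π))(√(1-ρ²) + ρ(π - arccos ρ))`,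
expressed as an integral against the explicit bivariate normal density. -/
theorem relu_noise_stability (ρ : ℝ) (hρ : ρ ∈ Set.Ioo (-1 : ℝ) 1) :
    (∫ p : ℝ × ℝ,
        max 0 p.1 * max 0 p.2 *
          (1 / (2 * π * Real.sqrt (1 - ρ ^ 2)) *
            Real.exp (-(p.1 ^ 2 - 2 * ρ * p.1 * p.2 + p.2 ^ 2) / (2 * (1 - ρ ^ 2)))))
      = 1 / (2 * π) * (Real.sqrt (1 - ρ ^ 2) + ρ * (π - Real.arccos ρ)) := by
  obtain ⟨hρ₁, hρ₂⟩ := hρ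
  have hρ₀ : 0 < 1 - ρ ^ 2 := by nlinarith
  set s := √(1 - ρ ^ 2)
  have hs : 0 < s := sqrt_pos.2 hρ₀
  have hcos : cos (arccos ρ) = ρ := cos_arccos hρ₁.le hρ₂.le
  have hsin : sin (arccos ρ) = s := sin_arccos ρ
  calc _ = |s| • |s|⁻¹ • ∫ p : ℝ × ℝ, _ := (smul_inv_smul₀ (abs_pos.2 hs.ne').ne' _).symm
    _ = s * ∫ z : ℝ × ℝ, 1 / (2 * π * s) * (max 0 z.1 *
          max 0 (cos (arccos ρ) * z.1 + sin (arccos ρ) * z.2) * exp (-(z.1 ^ 2 + z.2 ^ 2) / 2)) := by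
        rw [← integral_comp_shear _ ρ hs.ne', smul_eq_mul, abs_of_pos hs]
        congr 1
        refine integral_congr_ae (ae_of_all _ fun z => ?_)
        dsimp only
        rw [gaussian_exponent_comp_shear hρ₀.ne' (sq_sqrt hρ₀.le : s ^ 2 = _), hcos, hsin]
        ring
    _ = _ := by
        rw [integral_const_mul,
          integral_max_zero_mul_max_zero_mul_gaussian ⟨arccos_nonneg ρ, arccos_le_pi ρ⟩, hcos, hsin]
        field_simp
        ring
end

section
/- If f ∈ L²(γ) satisfies ⟨f, H_n⟩_{L²(γ)} = 0 for every n ∈ ℕ, where H_n are the physicists' Hermite polynomials, then f = 0 almost everywhere with respect to γ. In particular the Hermite polynomials span a dense subspace of L²(γ). -/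
/-!
Split `f = f⁺ - f⁻` and consider the finite measures `f⁺ γ` and `f⁻ γ`. Orthogonality to the
Hermite polynomials, which form a polynomial basis, says that these two measures have the same
moments, and since `γ` has Gaussian tails both have all exponential moments. Their complex
moment generating functions are then entire with the same Taylor coefficients at `0`, hence
equal, so the two measures coincide and `f⁺ = f⁻` almost everywhere.
-/

open Real MeasureTheory

/-- Physicists' Hermite polynomials via the Rodrigues formula. -/
noncomputable def physHermite (n : ℕ) (x : ℝ) : ℝ :=
  (-1 : ℝ) ^ n * Real.exp (x ^ 2) * iteratedDeriv n (fun t => Real.exp (-t ^ 2)) x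

/-- The Gaussian measure `dγ(x) = π^{-1/2} e^{-x²} dx` on `ℝ`. -/
noncomputable def gaussMeasure : Measure ℝ :=
  volume.withDensity fun x => ENNReal.ofReal (π ^ (-(1 : ℝ) / 2) * Real.exp (-x ^ 2))

open ProbabilityTheory Polynomial

theorem MeasureTheory.Measure.ext_of_integral_pow_eq {μ ν : Measure ℝ}
    [IsFiniteMeasure μ] [IsFiniteMeasure ν]
    (hμ : ∀ t, Integrable (fun x => exp (t * x)) μ) (hν : ∀ t, Integrable (fun x => exp (t * x)) ν)
    (h : ∀ n : ℕ, ∫ x, x ^ n ∂μ = ∫ x, x ^ n ∂ν) : μ = ν := by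
  have huniv {ρ : Measure ℝ} (hρ : ∀ t, Integrable (fun x => exp (t * x)) ρ) :
      integrableExpSet id ρ = Set.univ := Set.eq_univ_of_forall hρ
  have hentire {ρ : Measure ℝ} (hρ : ∀ t, Integrable (fun x => exp (t * x)) ρ) :
      Differentiable ℂ (complexMGF id ρ) := fun z =>
    (analyticAt_complexMGF (by simp [huniv hρ])).differentiableAt
  have hderiv {ρ : Measure ℝ} (hρ : ∀ t, Integrable (fun x => exp (t * x)) ρ) (n : ℕ) :
      iteratedDeriv n (complexMGF id ρ) 0 = ∫ x, x ^ n ∂ρ := by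
    rw [iteratedDeriv_complexMGF (by simp [huniv hρ])]
    simp [← integral_complex_ofReal]
  refine Measure.ext_of_complexMGF_id_eq (funext fun z => ?_)
  rw [← Complex.taylorSeries_eq_of_entire' 0 z (hentire hμ),
    ← Complex.taylorSeries_eq_of_entire' 0 z (hentire hν)]
  simp only [hderiv hμ, hderiv hν, h]

section PositivePart

variable {μ : Measure ℝ} {g : ℝ → ℝ}

theorem integral_withDensity_ofReal (hg : AEMeasurable g μ) (h : ℝ → ℝ) :
    ∫ x, h x ∂μ.withDensity (fun x => ENNReal.ofReal (g x)) = ∫ x, max (g x) 0 * h x ∂μ := by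
  rw [integral_withDensity_eq_integral_toReal_smul₀ hg.ennreal_ofReal (by simp)]
  simp [ENNReal.toReal_ofReal']

theorem integrable_withDensity_ofReal_iff (hg : AEMeasurable g μ) {h : ℝ → ℝ} :
    Integrable h (μ.withDensity (fun x => ENNReal.ofReal (g x))) ↔
      Integrable (fun x => max (g x) 0 * h x) μ := by
  rw [integrable_withDensity_iff_integrable_smul₀' hg.ennreal_ofReal (by simp)]
  simp [ENNReal.toReal_ofReal']

theorem integrable_exp_mul_withDensity_ofReal
    (hexp : ∀ t, Integrable (fun x => exp (t * x) * g x) μ) (t : ℝ) :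
    Integrable (fun x => exp (t * x)) (μ.withDensity (fun x => ENNReal.ofReal (g x))) := by
  have hg : Integrable g μ := by simpa using hexp 0
  rw [integrable_withDensity_ofReal_iff hg.aemeasurable]
  refine (hexp t).pos_part.congr (ae_of_all _ fun x => ?_)
  simp only [max_mul_of_nonneg _ _ (exp_pos _).le, zero_mul, mul_comm]

end PositivePart

theorem ae_eq_zero_of_integral_pow_mul_eq_zero {μ : Measure ℝ} {g : ℝ → ℝ}
    (hexp : ∀ t, Integrable (fun x => exp (t * x) * g x) μ)
    (hmom : ∀ n : ℕ, ∫ x, x ^ n * g x ∂μ = 0) : g =ᵐ[μ] 0 := by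
  have hg : Integrable g μ := by simpa using hexp 0
  have hgm : AEMeasurable g μ := hg.aemeasurable
  have hgm' : AEMeasurable (fun x => -g x) μ := hgm.neg
  set μp := μ.withDensity fun x => ENNReal.ofReal (g x)
  set μn := μ.withDensity fun x => ENNReal.ofReal (-g x)
  have : IsFiniteMeasure μp := isFiniteMeasure_withDensity_ofReal hg.2
  have : IsFiniteMeasure μn := isFiniteMeasure_withDensity_ofReal hg.neg.2
  have hexpp : ∀ t, Integrable (fun x => exp (t * x)) μp :=
    integrable_exp_mul_withDensity_ofReal hexp
  have hexpn : ∀ t, Integrable (fun x => exp (t * x)) μn :=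
    integrable_exp_mul_withDensity_ofReal fun t => by simpa using (hexp t).neg
  have hpow (n : ℕ) : ∫ x, x ^ n ∂μp = ∫ x, x ^ n ∂μn := by
    have hp := (integrable_withDensity_ofReal_iff hgm).1 <|
      integrable_pow_of_integrable_exp_mul one_ne_zero (hexpp 1) (hexpp (-1)) n
    have hn := (integrable_withDensity_ofReal_iff hgm').1 <|
      integrable_pow_of_integrable_exp_mul one_ne_zero (hexpn 1) (hexpn (-1)) n
    rw [integral_withDensity_ofReal hgm, integral_withDensity_ofReal hgm', ← sub_eq_zero,
      ← integral_sub hp hn]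
    convert hmom n using 1
    congr 1 with x
    rw [← sub_mul, max_zero_sub_eq_self, mul_comm]
  have hμ := Measure.ext_of_integral_pow_eq hexpp hexpn hpow
  rw [withDensity_eq_iff hgm.ennreal_ofReal hgm'.ennreal_ofReal
    ((lintegral_mono fun x => Real.ofReal_le_enorm (g x)).trans_lt hg.2).ne] at hμ
  filter_upwards [hμ] with x hx
  show g x = 0
  rcases le_total (g x) 0 with h | h
  · rw [ENNReal.ofReal_of_nonpos h, eq_comm, ENNReal.ofReal_eq_zero] at hx
    exact le_antisymm h (by linarith)
  · rw [ENNReal.ofReal_of_nonpos (neg_nonpos.2 h), ENNReal.ofReal_eq_zero] at hx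
    exact le_antisymm hx h

section ExponentialMoments

variable {μ : Measure ℝ}

theorem memLp_two_exp_mul (hμ : ∀ t, Integrable (fun x => exp (t * x)) μ) (t : ℝ) :
    MemLp (fun x => exp (t * x)) 2 μ := by
  rw [memLp_two_iff_integrable_sq (by fun_prop)]
  refine (hμ (2 * t)).congr (ae_of_all _ fun x => ?_)
  simp only [sq, ← exp_add]
  ring_nf

theorem memLp_two_eval (hμ : ∀ t, Integrable (fun x => exp (t * x)) μ) (p : ℝ[X]) :
    MemLp (fun x => p.eval x) 2 μ := by
  induction p using Polynomial.induction_on' with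
  | add p q hp hq => simp only [eval_add]; exact hp.add hq
  | monomial n a =>
    simp only [eval_monomial]
    refine MemLp.const_mul ?_ a
    rw [memLp_two_iff_integrable_sq (by fun_prop)]
    simpa [← pow_mul] using
      integrable_pow_of_integrable_exp_mul one_ne_zero (hμ 1) (by simpa using hμ (-1)) (n * 2)

theorem ae_eq_zero_of_integral_mul_eval_eq_zero (hμ : ∀ t, Integrable (fun x => exp (t * x)) μ)
    {f : ℝ → ℝ} (hf : MemLp f 2 μ)
    (horth : ∀ p : ℝ[X], ∫ x, f x * p.eval x ∂μ = 0) : f =ᵐ[μ] 0 := by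
  refine ae_eq_zero_of_integral_pow_mul_eq_zero
    (fun t => (memLp_two_exp_mul hμ t).integrable_mul hf) fun n => ?_
  simpa [mul_comm] using horth (X ^ n)

end ExponentialMoments

theorem integral_mul_eval_eq_zero_of_sequence {μ : Measure ℝ} {f : ℝ → ℝ}
    (S : Polynomial.Sequence ℝ) (hf : ∀ p : ℝ[X], Integrable (fun x => f x * p.eval x) μ)
    (hS : ∀ n, ∫ x, f x * (S n).eval x ∂μ = 0) (p : ℝ[X]) :
    ∫ x, f x * p.eval x ∂μ = 0 := by
  have hp : p ∈ Submodule.span ℝ (Set.range S) := by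
    rw [S.span fun i => (leadingCoeff_ne_zero.2 (S.ne_zero i)).isUnit]
    exact Submodule.mem_top
  induction hp using Submodule.span_induction with
  | mem q hq => obtain ⟨n, rfl⟩ := hq; exact hS n
  | zero => simp
  | add q r _ _ hq hr =>
    simp only [eval_add, mul_add]
    rw [integral_add (hf q) (hf r), hq, hr, add_zero]
  | smul a q _ hq =>
    simp only [eval_smul, smul_eq_mul, mul_left_comm _ a]
    rw [integral_const_mul, hq, mul_zero]

/-- `H_n(x) = 2^{n/2} He_n(√2 x)`, where Mathlib's `hermite n` is the probabilists' `He_n`. -/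
noncomputable def physHermitePoly (n : ℕ) : ℝ[X] :=
  C (√2 ^ n) * ((hermite n).map (algebraMap ℤ ℝ)).comp (C √2 * X)

theorem physHermite_eq_eval (n : ℕ) (x : ℝ) : physHermite n x = (physHermitePoly n).eval x := by
  have hgauss : (fun t => exp (-t ^ 2)) = fun t => exp (-((√2 * t) ^ 2 / 2)) := by
    ext t; rw [mul_pow, sq_sqrt zero_le_two]; ring_nf
  rw [physHermite, hgauss, iteratedDeriv_comp_const_mul (f := fun y => exp (-(y ^ 2 / 2)))
    (by fun_prop), physHermitePoly, eval_mul, eval_C, eval_comp, eval_map_algebraMap,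
    hermite_eq_deriv_gaussian', iteratedDeriv_eq_iterate]
  simp only [eval_mul, eval_C, eval_X]
  rw [mul_pow, sq_sqrt zero_le_two]
  ring_nf

theorem natDegree_physHermitePoly (n : ℕ) : (physHermitePoly n).natDegree = n := by
  rw [physHermitePoly, natDegree_C_mul (by positivity), natDegree_comp,
    (hermite_monic n).natDegree_map, natDegree_hermite, natDegree_C_mul_X _ (by positivity),
    mul_one]

theorem leadingCoeff_physHermitePoly (n : ℕ) : (physHermitePoly n).leadingCoeff = 2 ^ n := by
  rw [physHermitePoly, leadingCoeff_mul, leadingCoeff_C,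
    leadingCoeff_comp (by rw [natDegree_C_mul_X _ (by positivity)]; exact one_ne_zero),
    ((hermite_monic n).map _).leadingCoeff, (hermite_monic n).natDegree_map, natDegree_hermite,
    leadingCoeff_C_mul_X, one_mul, ← mul_pow, mul_self_sqrt zero_le_two]

theorem degree_physHermitePoly (n : ℕ) : (physHermitePoly n).degree = n := by
  have hne : physHermitePoly n ≠ 0 :=
    leadingCoeff_ne_zero.1 (by rw [leadingCoeff_physHermitePoly]; positivity)
  rw [degree_eq_natDegree hne, natDegree_physHermitePoly]

noncomputable def physHermiteSequence : Polynomial.Sequence ℝ where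
  elems' := physHermitePoly
  degree_eq' := degree_physHermitePoly

theorem gaussMeasure_eq_gaussianReal : gaussMeasure = gaussianReal 0 2⁻¹ := by
  rw [gaussianReal_of_var_ne_zero _ (by norm_num), gaussMeasure]
  congr 1 with x
  rw [gaussianPDF, gaussianPDFReal]
  congr 2
  · rw [NNReal.coe_inv, NNReal.coe_ofNat, mul_comm 2 π, mul_inv_cancel_right₀ two_ne_zero,
      sqrt_eq_rpow, ← rpow_neg pi_pos.le]
    norm_num
  · congr 1
    push_cast
    ring

/-- If `f ∈ L²(γ)` is orthogonal to every Hermite polynomial, then `f = 0`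
γ-almost everywhere (completeness of the Hermite basis). -/
theorem hermite_complete (f : ℝ → ℝ) (hf : MemLp f 2 gaussMeasure)
    (horth : ∀ n : ℕ, (∫ x, f x * physHermite n x ∂gaussMeasure) = 0) :
    f =ᵐ[gaussMeasure] 0 := by
  rw [gaussMeasure_eq_gaussianReal] at hf horth ⊢
  have hexp : ∀ t, Integrable (fun x => exp (t * x)) (gaussianReal 0 2⁻¹) :=
    integrable_exp_mul_gaussianReal
  refine ae_eq_zero_of_integral_mul_eval_eq_zero hexp hf <|
    integral_mul_eval_eq_zero_of_sequence physHermiteSequence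
      (fun p => hf.integrable_mul (memLp_two_eval hexp p)) fun n => ?_
  show ∫ x, f x * (physHermitePoly n).eval x ∂gaussianReal 0 2⁻¹ = 0
  simpa [physHermite_eq_eval] using horth n
end

section
/- Let Z be a chi-squared random variable with d degrees of freedom. Then for every u > 0, P[|Z - d| ≥ 2√(du) + 2u] ≤ 2e^{-u} (Laurent–Massart concentration; in particular P[Z - d ≥ 2√(du) + 2u] ≤ e^{-u}). -/
/-!
Chernoff's method. Each coordinate contributes `E[exp (t g²)] = (1 - 2t)^{-1/2}`, so the
moment generating function of `Z` is `(1 - 2t)^{-d/2}`. For the upper tail,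
`log w ≤ sinh (log w) = (w - w⁻¹)/2` with `w = (1 - 2t)⁻¹` bounds the centred log-mgf by
`d t² / (1 - 2t)`; for the lower tail, `log (1 + x) ≥ 2x / (x + 2)` bounds it by `d s² / (1 + s)`
at `t = -s`. The choices `t = √u / (√d + 2√u)` and `s = √u / (√d + √u)` turn both Chernoff
bounds into `e^{-u}`.
-/

open Real MeasureTheory ProbabilityTheory

lemma inv_sqrt_eq_exp_neg_log_div_two {c : ℝ} (hc : 0 < c) : (√c)⁻¹ = exp (-(log c / 2)) := by
  rw [← sqrt_inv, sqrt_eq_rpow, rpow_def_of_pos (inv_pos.2 hc), log_inv]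
  ring_nf

lemma inv_sqrt_le_exp_of_le_one {c : ℝ} (hc₀ : 0 < c) (hc₁ : c ≤ 1) :
    (√c)⁻¹ ≤ exp ((c⁻¹ - c) / 4) := by
  have hlog : log c⁻¹ ≤ (c⁻¹ - c) / 2 := by
    have := self_le_sinh_iff.2 (log_nonneg ((one_le_inv₀ hc₀).2 hc₁))
    rwa [sinh_log (inv_pos.2 hc₀), inv_inv] at this
  rw [log_inv] at hlog
  rw [inv_sqrt_eq_exp_neg_log_div_two hc₀, exp_le_exp]
  linarith

lemma inv_sqrt_one_add_le_exp {x : ℝ} (hx : 0 ≤ x) : (√(1 + x))⁻¹ ≤ exp (-(x / (x + 2))) := by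
  have hlog := le_log_one_add_of_nonneg hx
  rw [inv_sqrt_eq_exp_neg_log_div_two (by linarith), exp_le_exp]
  have h2 : 2 * x / (x + 2) = 2 * (x / (x + 2)) := by ring
  linarith

lemma gaussianPDFReal_mul_exp_mul_sq (t x : ℝ) :
    gaussianPDFReal 0 1 x * exp (t * x ^ 2) = (√(2 * π))⁻¹ * exp (-(1 / 2 - t) * x ^ 2) := by
  rw [gaussianPDFReal, mul_assoc, ← exp_add]
  push_cast
  ring_nf

/- No hypothesis on `t`: for `t ≥ 1/2` both sides are junk zeros (`integral_gaussian` and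
`Real.sqrt` of a nonpositive number). -/
lemma integral_exp_mul_sq_gaussianReal (t : ℝ) :
    ∫ x, exp (t * x ^ 2) ∂gaussianReal 0 1 = (√(1 - 2 * t))⁻¹ := by
  simp_rw [integral_gaussianReal_eq_integral_smul one_ne_zero, smul_eq_mul,
    gaussianPDFReal_mul_exp_mul_sq, integral_const_mul, integral_gaussian]
  rw [← sqrt_inv, ← sqrt_inv, ← sqrt_mul (by positivity)]
  congr 1
  field_simp

section ChiSquared

variable {ι : Type*} [Fintype ι]

lemma mgf_sum_sq_pi_gaussianReal (t : ℝ) :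
    mgf (fun g : ι → ℝ => ∑ i, g i ^ 2) (Measure.pi fun _ => gaussianReal 0 1) t
      = (√(1 - 2 * t))⁻¹ ^ Fintype.card ι := by
  simp_rw [mgf, Finset.mul_sum, exp_sum]
  rw [integral_fintype_prod_eq_pow (fun x => exp (t * x ^ 2)), integral_exp_mul_sq_gaussianReal t]

lemma integrable_exp_mul_sum_sq_pi_gaussianReal {t : ℝ} (ht : t < 1 / 2) :
    Integrable (fun g : ι → ℝ => exp (t * ∑ i, g i ^ 2)) (Measure.pi fun _ => gaussianReal 0 1) := by
  refine .of_integral_ne_zero ?_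
  rw [← mgf, mgf_sum_sq_pi_gaussianReal t]
  exact pow_ne_zero _ (inv_ne_zero (sqrt_ne_zero'.2 (by linarith)))

lemma pi_gaussianReal_sum_sq_sub_card_ge_le {u : ℝ} (hu : 0 < u) :
    (Measure.pi fun _ : ι => gaussianReal 0 1)
        {g | 2 * √(Fintype.card ι * u) + 2 * u ≤ ∑ i, g i ^ 2 - Fintype.card ι}
      ≤ ENNReal.ofReal (exp (-u)) := by
  rcases isEmpty_or_nonempty ι with hι | hι
  · have : ¬ 2 * u ≤ 0 := by linarith
    simp [Fintype.card_eq_zero, this]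
  obtain ⟨w, hw, hn⟩ : ∃ w > 0, (Fintype.card ι : ℝ) = w ^ 2 :=
    ⟨_, sqrt_pos.2 (by positivity), (sq_sqrt (by positivity)).symm⟩
  obtain ⟨v, hv, rfl⟩ : ∃ v > 0, u = v ^ 2 := ⟨_, sqrt_pos.2 hu, (sq_sqrt hu.le).symm⟩
  have hnu : √(Fintype.card ι * v ^ 2) = w * v := by
    rw [hn, ← mul_pow, sqrt_sq (by positivity)]
  set t := v / (w + 2 * v) with ht
  have h1t : 1 - 2 * t = w / (w + 2 * v) := by rw [ht]; field_simp; ring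
  have ht₀ : 0 ≤ t := by positivity
  have ht₁ : t < 1 / 2 := by
    have : 0 < w / (w + 2 * v) := by positivity
    linarith
  rw [← ofReal_measureReal]
  gcongr
  simp_rw [le_sub_iff_add_le', hnu, hn]
  calc _ ≤ exp (-t * (w ^ 2 + (2 * (w * v) + 2 * v ^ 2))) *
          mgf (fun g : ι → ℝ => ∑ i, g i ^ 2) (Measure.pi fun _ => gaussianReal 0 1) t :=
        measure_ge_le_exp_mul_mgf _ ht₀ (integrable_exp_mul_sum_sq_pi_gaussianReal ht₁)
    _ ≤ exp (-t * (w ^ 2 + (2 * (w * v) + 2 * v ^ 2))) *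
          exp (((1 - 2 * t)⁻¹ - (1 - 2 * t)) / 4) ^ Fintype.card ι := by
        rw [mgf_sum_sq_pi_gaussianReal]
        gcongr
        exact inv_sqrt_le_exp_of_le_one (by linarith) (by linarith)
    _ = exp (-v ^ 2) := by
        rw [← exp_nat_mul, ← exp_add, h1t, hn, ht]
        congr 1
        field_simp
        ring

lemma pi_gaussianReal_sum_sq_sub_card_le_le {u : ℝ} (hu : 0 < u) :
    (Measure.pi fun _ : ι => gaussianReal 0 1)
        {g | ∑ i, g i ^ 2 - Fintype.card ι ≤ -(2 * √(Fintype.card ι * u) + 2 * u)}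
      ≤ ENNReal.ofReal (exp (-u)) := by
  obtain ⟨w, hw, hn⟩ : ∃ w ≥ 0, (Fintype.card ι : ℝ) = w ^ 2 :=
    ⟨_, sqrt_nonneg _, (sq_sqrt (by positivity)).symm⟩
  obtain ⟨v, hv, rfl⟩ : ∃ v > 0, u = v ^ 2 := ⟨_, sqrt_pos.2 hu, (sq_sqrt hu.le).symm⟩
  have hnu : √(Fintype.card ι * v ^ 2) = w * v := by
    rw [hn, ← mul_pow, sqrt_sq (by positivity)]
  set s := v / (w + v) with hs
  have hs₀ : 0 ≤ s := by positivity
  rw [← ofReal_measureReal]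
  gcongr
  simp_rw [sub_le_iff_le_add', hnu, hn]
  calc _ ≤ exp (-(-s) * (w ^ 2 + -(2 * (w * v) + 2 * v ^ 2))) *
          mgf (fun g : ι → ℝ => ∑ i, g i ^ 2) (Measure.pi fun _ => gaussianReal 0 1) (-s) :=
        measure_le_le_exp_mul_mgf _ (by linarith)
          (integrable_exp_mul_sum_sq_pi_gaussianReal (by linarith))
    _ ≤ exp (-(-s) * (w ^ 2 + -(2 * (w * v) + 2 * v ^ 2))) *
          exp (-(2 * s / (2 * s + 2))) ^ Fintype.card ι := by
        rw [mgf_sum_sq_pi_gaussianReal, mul_neg, sub_neg_eq_add]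
        gcongr
        exact inv_sqrt_one_add_le_exp (by positivity)
    _ ≤ exp (-v ^ 2) := by
        rw [← exp_nat_mul, ← exp_add, exp_le_exp, hn]
        have exponent_eq : -(-s) * (w ^ 2 + -(2 * (w * v) + 2 * v ^ 2))
              + w ^ 2 * -(2 * s / (2 * s + 2))
            = v ^ 2 * (w ^ 2 / ((w + v) * (w + 2 * v))) - 2 * v ^ 2 := by
          rw [hs]; field_simp; ring
        have ratio_le_one : w ^ 2 / ((w + v) * (w + 2 * v)) ≤ 1 := by
          rw [div_le_one (by positivity)]; nlinarith
        rw [exponent_eq]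
        nlinarith [sq_nonneg v]

end ChiSquared

/-- Laurent–Massart concentration for a chi-squared random variable
`Z = Σ_{i<d} g_i²` with `d` degrees of freedom:
`P[|Z - d| ≥ 2√(du) + 2u] ≤ 2 e^{-u}`, and the upper tail satisfies
`P[Z - d ≥ 2√(du) + 2u] ≤ e^{-u}`. -/
theorem laurent_massart (d : ℕ) (u : ℝ) (hu : 0 < u) :
    (Measure.pi fun _ : Fin d => gaussianReal 0 1)
        {g | 2 * Real.sqrt (d * u) + 2 * u ≤ |(∑ i, (g i) ^ 2) - d|}
      ≤ ENNReal.ofReal (2 * Real.exp (-u)) ∧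
    (Measure.pi fun _ : Fin d => gaussianReal 0 1)
        {g | 2 * Real.sqrt (d * u) + 2 * u ≤ (∑ i, (g i) ^ 2) - d}
      ≤ ENNReal.ofReal (Real.exp (-u)) := by
  have upper := pi_gaussianReal_sum_sq_sub_card_ge_le (ι := Fin d) hu
  have lower := pi_gaussianReal_sum_sq_sub_card_le_le (ι := Fin d) hu
  simp only [Fintype.card_fin] at upper lower
  refine ⟨?_, upper⟩
  simp_rw [le_abs', Set.ofPred_or]
  calc _ ≤ ENNReal.ofReal (exp (-u)) + ENNReal.ofReal (exp (-u)) :=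
        (measure_union_le _ _).trans (add_le_add lower upper)
    _ = ENNReal.ofReal (2 * exp (-u)) := by
        rw [← ENNReal.ofReal_add (by positivity) (by positivity), two_mul]
end
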